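/- arXiv:1612.02349 — 2 statements merged into one kernel-verified Lean document; each statement's English description precedes it below -/
import Mathlib

section
/- Let G be a finite group that is the product G = AB of two supersoluble subgroups A and B (no permutability assumption beyond G = AB). Then the supersoluble residual of G is contained in [A,B], i.e. G^𝔘 ≤ [A,B]. -/
open Pointwise

universe u

/-- A group is *supersoluble* if it has a normal series (each term normal in the
whole group) all of whose factors are cyclic. -/
def IsSupersoluble (G : Type u) [Group G] : Prop :=
  ∃ (n : ℕ) (s : Fin (n + 1) → Subgroup G) (_ : ∀ i, (s i).Normal),
    s 0 = ⊥ ∧ s (Fin.last n) = ⊤ ∧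
      (∀ i : Fin n, s i.castSucc ≤ s i.succ) ∧
      ∀ i : Fin n,
        IsCyclic (Subgroup.map (QuotientGroup.mk' (s i.castSucc)) (s i.succ))

/-- The `𝔉`-residual of `G` for a class of groups `P`: the smallest normal subgroup
of `G` whose quotient satisfies `P`. -/
def groupResidual (P : (H : Type u) → [Group H] → Prop) (G : Type u) [Group G] :
    Subgroup G :=
  sInf {N : Subgroup G | ∃ _ : N.Normal, P (G ⧸ N)}

/-- The supersoluble residual `G^𝔘`. -/
abbrev supersolubleResidual (G : Type u) [Group G] : Subgroup G :=
  groupResidual (fun H _ => IsSupersoluble H) G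

/-- The nilpotent residual `G^𝔑`. -/
abbrev nilpotentResidual (G : Type u) [Group G] : Subgroup G :=
  groupResidual (fun H _ => Group.IsNilpotent H) G

/-- `G` is the *mutually permutable* product of its subgroups `A` and `B` when
`UB = BU` for every `U ≤ A` and `AV = VA` for every `V ≤ B`. -/
def MutuallyPermutable {G : Type u} [Group G] (A B : Subgroup G) : Prop :=
  (∀ U : Subgroup G, U ≤ A → (U : Set G) * (B : Set G) = (B : Set G) * (U : Set G)) ∧
  (∀ V : Subgroup G, V ≤ B → (A : Set G) * (V : Set G) = (V : Set G) * (A : Set G))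

/-- A group is *`p`-supersoluble* if every chief factor (a maximal gap `N < M`
between normal subgroups of `G`) whose order is divisible by `p` has order
exactly `p`. -/
def IsPSupersoluble (p : ℕ) (G : Type u) [Group G] : Prop :=
  ∀ N M : Subgroup G, N.Normal → M.Normal → N < M →
    (∀ K : Subgroup G, K.Normal → N ≤ K → K ≤ M → K = N ∨ K = M) →
    (p ∣ N.relIndex M → N.relIndex M = p)

/-- A group is *`p`-nilpotent* if it has a normal Hall `p'`-subgroup, i.e. a
normal subgroup of order coprime to `p` and of `p`-power index. -/
def IsPNilpotent (p : ℕ) (G : Type u) [Group G] : Prop :=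
  ∃ N : Subgroup G, N.Normal ∧ ¬ p ∣ Nat.card N ∧ ∃ k : ℕ, N.index = p ^ k

/-- The `p`-supersoluble residual `G^{p𝔘}`. -/
abbrev pSupersolubleResidual (p : ℕ) (G : Type u) [Group G] : Subgroup G :=
  groupResidual (fun H _ => IsPSupersoluble p H) G

/-- The `p`-nilpotent residual `G^{𝔈_{p'}𝔑_p}`. -/
abbrev pNilpotentResidual (p : ℕ) (G : Type u) [Group G] : Subgroup G :=
  groupResidual (fun H _ => IsPNilpotent p H) G

/-!
`⁅A, B⁆` is normalized by `A` and by `B`, hence normal in `G = AB`. Modulo `⁅A, B⁆` the images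
of `A` and `B` commute elementwise, so `G ⧸ ⁅A, B⁆` is a homomorphic image of `A × B`, and
supersolubility passes to direct products and to homomorphic images.
-/

open Subgroup QuotientGroup

section Series

variable {G H : Type u} [Group G] [Group H]

theorem isCyclic_map_mk'_iff {N T : Subgroup G} [N.Normal] :
    IsCyclic (T.map (mk' N)) ↔ ∃ g : G, T ≤ N ⊔ zpowers g := by
  constructor
  · intro hcyc
    obtain ⟨q, hq⟩ := (Subgroup.isCyclic_iff_exists_zpowers_eq_top _).mp hcyc
    obtain ⟨g, rfl⟩ := mk'_surjective N q
    refine ⟨g, ?_⟩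
    calc T ≤ (T.map (mk' N)).comap (mk' N) := le_comap_map _ _
      _ = zpowers g ⊔ N := by rw [← hq, ← MonoidHom.map_zpowers, comap_map_eq, ker_mk']
      _ = N ⊔ zpowers g := sup_comm _ _
  · rintro ⟨g, hg⟩
    refine Subgroup.isCyclic_of_le (H' := zpowers (mk' N g)) ?_
    simpa [Subgroup.map_sup, MonoidHom.map_zpowers] using map_mono (f := mk' N) hg

/-- `IsSupersoluble` with the series indexed by `ℕ` and the cyclicity of `s (i + 1) / s i`
expressed by a generator in `G`, so that no quotient by a varying subgroup is involved. -/
def HasCyclicNormalSeries (G : Type u) [Group G] : Prop :=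
  ∃ (n : ℕ) (s : ℕ → Subgroup G), (∀ i, (s i).Normal) ∧ Monotone s ∧ s 0 = ⊥ ∧ s n = ⊤ ∧
    ∀ i, ∃ g : G, s (i + 1) ≤ s i ⊔ zpowers g

theorem isSupersoluble_iff_hasCyclicNormalSeries :
    IsSupersoluble G ↔ HasCyclicNormalSeries G := by
  constructor
  · rintro ⟨n, s, hnormal, hbot, htop, hle, hcyc⟩
    refine ⟨n, fun i => s (Fin.clamp i n), fun i => hnormal _,
      (Fin.monotone_iff_le_succ.mpr hle).comp Fin.clamp_monotone, ?_, ?_, fun i => ?_⟩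
    · simpa [Fin.clamp] using hbot
    · simpa [Fin.clamp_eq_last] using htop
    rcases lt_or_ge i n with hi | hi
    · have hcast : Fin.clamp i n = (⟨i, hi⟩ : Fin n).castSucc := Fin.ext (by simp [hi.le])
      have hsucc : Fin.clamp (i + 1) n = (⟨i, hi⟩ : Fin n).succ := Fin.ext (by simp [hi])
      simp only [hcast, hsucc]
      exact isCyclic_map_mk'_iff.mp (hcyc ⟨i, hi⟩)
    · refine ⟨1, ?_⟩
      dsimp only
      rw [Fin.clamp_eq_last _ _ hi, Fin.clamp_eq_last _ _ (by omega)]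
      exact le_sup_left
  · rintro ⟨n, s, hnormal, hmono, hbot, htop, hcyc⟩
    exact ⟨n, fun i => s i, fun i => hnormal i, hbot, htop, fun i => hmono (Nat.le_succ i),
      fun i => isCyclic_map_mk'_iff.mpr (hcyc i)⟩

theorem HasCyclicNormalSeries.of_surjective (f : G →* H) (hf : Function.Surjective f)
    (hG : HasCyclicNormalSeries G) : HasCyclicNormalSeries H := by
  obtain ⟨n, s, hnormal, hmono, hbot, htop, hcyc⟩ := hG
  refine ⟨n, fun i => (s i).map f, fun i => (hnormal i).map f hf,
    fun i j hij => map_mono (hmono hij),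
    by simp [hbot], by simp [htop, map_top_of_surjective f hf], fun i => ?_⟩
  obtain ⟨g, hg⟩ := hcyc i
  refine ⟨f g, ?_⟩
  simpa [Subgroup.map_sup, MonoidHom.map_zpowers] using map_mono (f := f) hg

theorem prod_le_prod_sup_zpowers_inl {K K' : Subgroup G} {L : Subgroup H} {g : G}
    (hK : K' ≤ K ⊔ zpowers g) : K'.prod L ≤ K.prod L ⊔ zpowers (g, 1) := by
  obtain ⟨hKinl, hLinr⟩ := prod_le_iff.mp (le_refl (K.prod L))
  refine prod_le_iff.mpr ⟨?_, hLinr.trans le_sup_left⟩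
  calc K'.map (MonoidHom.inl G H) ≤ (K ⊔ zpowers g).map (MonoidHom.inl G H) := map_mono hK
    _ = K.map (MonoidHom.inl G H) ⊔ zpowers (g, 1) := by
      rw [Subgroup.map_sup, MonoidHom.map_zpowers, MonoidHom.inl_apply]
    _ ≤ K.prod L ⊔ zpowers (g, 1) := sup_le_sup_right hKinl _

theorem prod_le_prod_sup_zpowers_inr {K : Subgroup G} {L L' : Subgroup H} {h : H}
    (hL : L' ≤ L ⊔ zpowers h) : K.prod L' ≤ K.prod L ⊔ zpowers (1, h) := by
  obtain ⟨hKinl, hLinr⟩ := prod_le_iff.mp (le_refl (K.prod L))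
  refine prod_le_iff.mpr ⟨hKinl.trans le_sup_left, ?_⟩
  calc L'.map (MonoidHom.inr G H) ≤ (L ⊔ zpowers h).map (MonoidHom.inr G H) := map_mono hL
    _ = L.map (MonoidHom.inr G H) ⊔ zpowers (1, h) := by
      rw [Subgroup.map_sup, MonoidHom.map_zpowers, MonoidHom.inr_apply]
    _ ≤ K.prod L ⊔ zpowers (1, h) := sup_le_sup_right hLinr _

/-- The series `s i × t (i - n)`: first climb through the series of `G`, then through that
of `H`. -/
theorem HasCyclicNormalSeries.prod (hG : HasCyclicNormalSeries G) (hH : HasCyclicNormalSeries H) :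
    HasCyclicNormalSeries (G × H) := by
  obtain ⟨n, s, hsnormal, hsmono, hsbot, hstop, hscyc⟩ := hG
  obtain ⟨m, t, htnormal, htmono, htbot, httop, htcyc⟩ := hH
  have hs_top : ∀ i, n ≤ i → s i = ⊤ := fun i hi => top_unique (hstop ▸ hsmono hi)
  refine ⟨n + m, fun i => (s i).prod (t (i - n)),
    fun i => prod_normal _ _ (hH := hsnormal i) (hK := htnormal _),
    fun i j hij => prod_mono (hsmono hij) (htmono (Nat.sub_le_sub_right hij n)), ?_, ?_,
    fun i => ?_⟩
  · simp [hsbot, htbot]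
  · simp [hs_top (n + m) (Nat.le_add_right n m), httop]
  dsimp only
  rcases lt_or_ge i n with hi | hi
  · obtain ⟨g, hg⟩ := hscyc i
    refine ⟨(g, 1), ?_⟩
    rw [show i + 1 - n = i - n by omega]
    exact prod_le_prod_sup_zpowers_inl hg
  · obtain ⟨h, hh⟩ := htcyc (i - n)
    refine ⟨(1, h), ?_⟩
    rw [show i + 1 - n = i - n + 1 by omega, hs_top i hi, hs_top (i + 1) (by omega)]
    exact prod_le_prod_sup_zpowers_inr hh

end Series

theorem IsSupersoluble.of_surjective {G H : Type u} [Group G] [Group H] (f : G →* H)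
    (hf : Function.Surjective f) (hG : IsSupersoluble G) : IsSupersoluble H :=
  isSupersoluble_iff_hasCyclicNormalSeries.mpr
    ((isSupersoluble_iff_hasCyclicNormalSeries.mp hG).of_surjective f hf)

theorem IsSupersoluble.prod {G H : Type u} [Group G] [Group H] (hG : IsSupersoluble G)
    (hH : IsSupersoluble H) : IsSupersoluble (G × H) :=
  isSupersoluble_iff_hasCyclicNormalSeries.mpr
    ((isSupersoluble_iff_hasCyclicNormalSeries.mp hG).prod
      (isSupersoluble_iff_hasCyclicNormalSeries.mp hH))

theorem groupResidual_le {P : (H : Type u) → [Group H] → Prop} {G : Type u} [Group G]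
    {N : Subgroup G} [hN : N.Normal] (h : P (G ⧸ N)) : groupResidual P G ≤ N :=
  sInf_le ⟨hN, h⟩

section Commutator

variable {G : Type u} [Group G] {A B : Subgroup G}

theorem Subgroup.commutator_normal_of_mul_eq_univ (hAB : (A : Set G) * (B : Set G) = Set.univ) :
    ⁅A, B⁆.Normal := by
  refine normalizer_eq_top_iff.mp (eq_top_iff.mpr fun g _ => ?_)
  obtain ⟨a, ha, b, hb, rfl⟩ := Set.mem_mul.mp (hAB ▸ Set.mem_univ g)
  exact mul_mem (normalizer_commutator_ge_left A B ha) (normalizer_commutator_ge_right A B hb)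

theorem QuotientGroup.commute_mk_of_mem_commutator [⁅A, B⁆.Normal] {a b : G} (ha : a ∈ A)
    (hb : b ∈ B) : Commute (a : G ⧸ ⁅A, B⁆) (b : G ⧸ ⁅A, B⁆) := by
  rw [← commutatorElement_eq_one_iff_commute, ← mk'_apply, ← mk'_apply, ← map_commutatorElement,
    mk'_apply, eq_one_iff]
  exact commutator_mem_commutator ha hb

noncomputable def prodToQuotientCommutator (A B : Subgroup G) [⁅A, B⁆.Normal] :
    A × B →* G ⧸ ⁅A, B⁆ :=
  MonoidHom.noncommCoprod ((mk' ⁅A, B⁆).comp A.subtype) ((mk' ⁅A, B⁆).comp B.subtype)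
    fun a b => commute_mk_of_mem_commutator a.2 b.2

theorem prodToQuotientCommutator_surjective [⁅A, B⁆.Normal]
    (hAB : (A : Set G) * (B : Set G) = Set.univ) :
    Function.Surjective (prodToQuotientCommutator A B) := by
  intro q
  obtain ⟨g, rfl⟩ := mk'_surjective _ q
  obtain ⟨a, ha, b, hb, rfl⟩ := Set.mem_mul.mp (hAB ▸ Set.mem_univ g)
  exact ⟨(⟨a, ha⟩, ⟨b, hb⟩), rfl⟩

end Commutator

theorem supersolubleResidual_le_commutator_of_product_general
    {G : Type u} [Group G] (A B : Subgroup G)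
    (hprod : (A : Set G) * (B : Set G) = Set.univ)
    (hA : IsSupersoluble ↥A) (hB : IsSupersoluble ↥B) :
    supersolubleResidual G ≤ ⁅A, B⁆ := by
  have := Subgroup.commutator_normal_of_mul_eq_univ hprod
  exact groupResidual_le (P := fun H _ => IsSupersoluble H)
    ((hA.prod hB).of_surjective _ (prodToQuotientCommutator_surjective hprod))

/-- **Lemma 4.** If the finite group `G = AB` is the product of supersoluble
subgroups `A` and `B`, then `G^𝔘 ≤ [A,B]`. -/
theorem supersolubleResidual_le_commutator_of_product
    {G : Type u} [Group G] [Finite G] (A B : Subgroup G)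
    (hprod : (A : Set G) * (B : Set G) = Set.univ)
    (hA : IsSupersoluble ↥A) (hB : IsSupersoluble ↥B) :
    supersolubleResidual G ≤ ⁅A, B⁆ :=
  supersolubleResidual_le_commutator_of_product_general A B hprod hA hB
end

section
/- Let G be a finite group that is the product G = AB of two supersoluble subgroups A and B. Then the derived subgroup of the quotient G/[A,B] is nilpotent; equivalently, G'[A,B]/[A,B] is nilpotent. -/
open Pointwise

universe u

/-!
The automorphism group of a cyclic group is abelian, so the derived subgroup of a group
centralizes every cyclic factor of a normal series; hence the derived subgroup of a supersoluble
group is nilpotent. Modulo `[A, B]` the images of `A` and `B` commute elementwise, so `G/[A, B]`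
is a homomorphic image of `A × B`, and its derived subgroup is an image of `A' × B'`.
-/

open scoped commutatorElement


lemma IsCyclic.mulAut_commute {C : Type*} [Group C] [IsCyclic C] (σ τ : MulAut C) :
    Commute σ τ :=
  (IsCyclic.mulAutMulEquiv C).injective <| by simp only [map_mul, mul_comm]

lemma commutator_le_centralizer_of_isCyclic {Q : Type*} [Group Q] (C : Subgroup Q) [C.Normal]
    [IsCyclic C] : commutator Q ≤ Subgroup.centralizer C := by
  rw [commutator_def, Subgroup.commutator_le]
  intro x _ y _ c hc
  have hconj : MulAut.conjNormal (H := C) ⁅x, y⁆ = 1 := by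
    rw [map_commutatorElement, commutatorElement_eq_one_iff_commute]
    exact IsCyclic.mulAut_commute _ _
  have hfix := congrArg (fun σ : MulAut C => ((σ ⟨c, hc⟩ : C) : Q)) hconj
  simp only [MulAut.conjNormal_apply, MulAut.one_apply] at hfix
  exact eq_mul_inv_iff_mul_eq.mp hfix.symm

lemma map_commutator_of_surjective {G Q : Type*} [Group G] [Group Q] {f : G →* Q}
    (hf : Function.Surjective f) : (commutator G).map f = commutator Q := by
  rw [commutator_def, commutator_def, Subgroup.map_commutator, Subgroup.map_top_of_surjective f hf]

lemma commutator_derived_le_of_isCyclic {G : Type*} [Group G] {N M : Subgroup G} [N.Normal]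
    [hM : M.Normal] (hcyc : IsCyclic (M.map (QuotientGroup.mk' N))) :
    ⁅M, commutator G⁆ ≤ N := by
  have hsurj := QuotientGroup.mk'_surjective N
  have : (M.map (QuotientGroup.mk' N)).Normal := hM.map _ hsurj
  rw [← QuotientGroup.ker_mk' N, ← Subgroup.map_eq_bot_iff, Subgroup.map_commutator,
    map_commutator_of_surjective hsurj, Subgroup.commutator_eq_bot_iff_le_centralizer]
  exact Subgroup.le_centralizer_iff.mp (commutator_le_centralizer_of_isCyclic _)

/-- The invariant: `s i ⊓ H` lies in the `i`-th term of the upper central series of `H`. -/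
lemma Subgroup.isNilpotent_of_commutator_le_series {G : Type*} [Group G] (H : Subgroup G)
    {n : ℕ} (s : Fin (n + 1) → Subgroup G) (h0 : s 0 = ⊥) (hlast : s (Fin.last n) = ⊤)
    (hstep : ∀ i : Fin n, ⁅s i.succ, H⁆ ≤ s i.castSucc) : Group.IsNilpotent H := by
  have hupper : ∀ i : Fin (n + 1), ∀ x : H, (x : G) ∈ s i →
      x ∈ upperCentralSeries H i := by
    refine Fin.induction ?_ (fun i ih => ?_)
    · intro x hx
      rw [h0, Subgroup.mem_bot, OneMemClass.coe_eq_one] at hx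
      exact hx ▸ Subgroup.one_mem _
    · intro x hx y
      exact ih _ (hstep i (Subgroup.commutator_mem_commutator hx y.2))
  refine ⟨n, eq_top_iff.mpr fun x _ => ?_⟩
  simpa using hupper (Fin.last n) x (hlast ▸ Subgroup.mem_top _)

lemma isNilpotent_commutator_of_isSupersoluble {G : Type u} [Group G] (h : IsSupersoluble G) :
    Group.IsNilpotent (commutator G) := by
  obtain ⟨n, s, hnormal, h0, hlast, -, hcyclic⟩ := h
  refine (commutator G).isNilpotent_of_commutator_le_series s h0 hlast fun i => ?_
  have := hnormal i.castSucc
  have := hnormal i.succ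
  exact commutator_derived_le_of_isCyclic (hcyclic i)

lemma isNilpotent_commutator_of_surjective {G Q : Type*} [Group G] [Group Q]
    [Group.IsNilpotent (commutator G)] {f : G →* Q} (hf : Function.Surjective f) :
    Group.IsNilpotent (commutator Q) := by
  exact map_commutator_of_surjective hf ▸
    Group.nilpotent_of_surjective _ (f.subgroupMap_surjective (commutator G))

instance isNilpotent_commutator_prod {G₁ G₂ : Type*} [Group G₁] [Group G₂]
    [Group.IsNilpotent (commutator G₁)] [Group.IsNilpotent (commutator G₂)] :
    Group.IsNilpotent (commutator (G₁ × G₂)) := by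
  have hprod : commutator (G₁ × G₂) = (commutator G₁).prod (commutator G₂) := by
    rw [commutator_def, commutator_def, commutator_def, ← Subgroup.top_prod_top,
      Subgroup.commutator_prod_prod]
  exact hprod ▸ Group.nilpotent_of_mulEquiv (Subgroup.prodEquiv _ _).symm

lemma surjective_noncommCoprod_of_mul_eq_univ {G Q : Type*} [Group G] [Group Q] {f : G →* Q}
    (hf : Function.Surjective f) {A B : Subgroup G} (hAB : (A : Set G) * (B : Set G) = Set.univ)
    (hcomm : ∀ (a : A) (b : B), Commute (f.comp A.subtype a) (f.comp B.subtype b)) :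
    Function.Surjective ((f.comp A.subtype).noncommCoprod (f.comp B.subtype) hcomm) := by
  intro q
  obtain ⟨g, rfl⟩ := hf q
  obtain ⟨a, ha, b, hb, rfl⟩ : g ∈ (A : Set G) * (B : Set G) := hAB ▸ Set.mem_univ g
  exact ⟨(⟨a, ha⟩, ⟨b, hb⟩), (map_mul f a b).symm⟩

theorem isNilpotent_derived_quotient_commutator_general
    {G : Type u} [Group G] (A B : Subgroup G)
    (hprod : (A : Set G) * (B : Set G) = Set.univ)
    (hA : IsSupersoluble ↥A) (hB : IsSupersoluble ↥B)
    (hN : (⁅A, B⁆ : Subgroup G).Normal) :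
    Group.IsNilpotent ↥(commutator (G ⧸ (⁅A, B⁆ : Subgroup G))) := by
  have hcomm : ∀ (a : A) (b : B), Commute ((QuotientGroup.mk' ⁅A, B⁆).comp A.subtype a)
      ((QuotientGroup.mk' ⁅A, B⁆).comp B.subtype b) := fun a b =>
    commutatorElement_eq_one_iff_commute.mp <| by
      show ⁅QuotientGroup.mk' _ (a : G), QuotientGroup.mk' _ (b : G)⁆ = 1
      rw [← map_commutatorElement, QuotientGroup.mk'_apply, QuotientGroup.eq_one_iff]
      exact Subgroup.commutator_mem_commutator a.2 b.2
  have := isNilpotent_commutator_of_isSupersoluble hA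
  have := isNilpotent_commutator_of_isSupersoluble hB
  exact isNilpotent_commutator_of_surjective
    (surjective_noncommCoprod_of_mul_eq_univ (QuotientGroup.mk'_surjective _) hprod hcomm)

/-- If the finite group `G = AB` is the product of supersoluble subgroups `A` and
`B`, then the derived subgroup of `G/[A,B]` is nilpotent.  (The subgroup `[A,B]`
is normal in `G` in this situation; normality is recorded as a hypothesis in
order to form the quotient.) -/
theorem isNilpotent_derived_quotient_commutator
    {G : Type u} [Group G] [Finite G] (A B : Subgroup G)
    (hprod : (A : Set G) * (B : Set G) = Set.univ)
    (hA : IsSupersoluble ↥A) (hB : IsSupersoluble ↥B)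
    (hN : (⁅A, B⁆ : Subgroup G).Normal) :
    Group.IsNilpotent ↥(commutator (G ⧸ (⁅A, B⁆ : Subgroup G))) :=
  isNilpotent_derived_quotient_commutator_general A B hprod hA hB hN
end
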